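/- arXiv:2502.10199 — 2 statements merged into one kernel-verified Lean document; each statement's English description precedes it below -/
import Mathlib

section
/- The one-step Hug map Ψ_δ is time-reversible: for all x, v, x′, v′ ∈ ℝⁿ, Ψ_δ(x,v) = (x′,v′) if and only if Ψ_δ(x′,−v′) = (x,−v). -/
open Matrix MeasureTheory

noncomputable section

abbrev Evec (n : ℕ) : Type := EuclideanSpace ℝ (Fin n)

/-- Apply a matrix to a vector of Euclidean space. -/
def mvE {m n : ℕ} (A : Matrix (Fin m) (Fin n) ℝ) (v : Evec n) : Evec m :=
  Matrix.toEuclideanLin A v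

/-- Moore–Penrose pseudoinverse `Aᵀ(AAᵀ)⁻¹` of a full-rank wide matrix. -/
def pinv {m n : ℕ} (A : Matrix (Fin m) (Fin n) ℝ) : Matrix (Fin n) (Fin m) ℝ :=
  Aᵀ * (A * Aᵀ)⁻¹

/-- Orthogonal projection onto the normal space: `N = A⁺A`. -/
def Nproj {m n : ℕ} (A : Matrix (Fin m) (Fin n) ℝ) : Matrix (Fin n) (Fin n) ℝ :=
  pinv A * A

/-- Orthogonal projection onto the tangent space: `T = I - N`. -/
def Tproj {m n : ℕ} (A : Matrix (Fin m) (Fin n) ℝ) : Matrix (Fin n) (Fin n) ℝ :=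
  1 - Nproj A

/-- Reflection: `R = I - 2N`. -/
def Rrefl {m n : ℕ} (A : Matrix (Fin m) (Fin n) ℝ) : Matrix (Fin n) (Fin n) ℝ :=
  1 - (2 : ℝ) • Nproj A

/-- One step of the Hug integrator. -/
def hugStep {m n : ℕ} (J : Evec n → Matrix (Fin m) (Fin n) ℝ) (δ : ℝ)
    (p : Evec n × Evec n) : Evec n × Evec n :=
  let xh := p.1 + (δ / 2) • p.2
  let v' := mvE (Rrefl (J xh)) p.2
  (xh + (δ / 2) • v', v')

theorem Matrix.isUnit_of_rank_eq_card {ι K : Type*} [Fintype ι] [DecidableEq ι] [Field K]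
    {A : Matrix ι ι K} (h : A.rank = Fintype.card ι) : IsUnit A := by
  rw [← Matrix.mulVec_surjective_iff_isUnit, ← Matrix.coe_mulVecLin, ← LinearMap.range_eq_top]
  apply Submodule.eq_top_of_finrank_eq
  rwa [Module.finrank_fintype_fun_eq_card]

theorem Matrix.isUnit_mul_transpose_of_rank_eq {m n : ℕ} {A : Matrix (Fin m) (Fin n) ℝ}
    (h : A.rank = m) : IsUnit (A * Aᵀ) :=
  Matrix.isUnit_of_rank_eq_card <| by rw [Matrix.rank_self_mul_transpose, h, Fintype.card_fin]

theorem IsIdempotentElem.one_sub_two_smul_mul_self {R A : Type*} [Semiring R] [Ring A]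
    [Module R A] {p : A} (hp : IsIdempotentElem p) : (1 - (2 : R) • p) * (1 - (2 : R) • p) = 1 := by
  rw [two_smul]
  noncomm_ring
  rw [hp.eq]
  abel

theorem isIdempotentElem_Nproj {m n : ℕ} {A : Matrix (Fin m) (Fin n) ℝ} (h : A.rank = m) :
    IsIdempotentElem (Nproj A) := by
  have hinv : (A * Aᵀ)⁻¹ * (A * Aᵀ) = 1 :=
    Matrix.nonsing_inv_mul _ ((Matrix.isUnit_iff_isUnit_det _).mp
      (Matrix.isUnit_mul_transpose_of_rank_eq h))
  calc Aᵀ * (A * Aᵀ)⁻¹ * A * (Aᵀ * (A * Aᵀ)⁻¹ * A)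
      = Aᵀ * ((A * Aᵀ)⁻¹ * (A * Aᵀ)) * (A * Aᵀ)⁻¹ * A := by simp only [Matrix.mul_assoc]
    _ = Aᵀ * (A * Aᵀ)⁻¹ * A := by rw [hinv, Matrix.mul_one]

theorem Rrefl_mul_self {m n : ℕ} {A : Matrix (Fin m) (Fin n) ℝ} (h : A.rank = m) :
    Rrefl A * Rrefl A = 1 :=
  (isIdempotentElem_Nproj h).one_sub_two_smul_mul_self

theorem mvE_mvE {k m n : ℕ} (A : Matrix (Fin m) (Fin n) ℝ) (B : Matrix (Fin n) (Fin k) ℝ)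
    (v : Evec k) :
    mvE A (mvE B v) = mvE (A * B) v := by
  simp [mvE]

theorem mvE_mvE_of_mul_self_eq_one {n : ℕ} {A : Matrix (Fin n) (Fin n) ℝ} (hA : A * A = 1)
    (v : Evec n) : mvE A (mvE A v) = v := by
  rw [mvE_mvE, hA]
  simp [mvE]

def momentumFlip {n : ℕ} (p : Evec n × Evec n) : Evec n × Evec n :=
  (p.1, -p.2)

theorem momentumFlip_involutive {n : ℕ} : Function.Involutive (momentumFlip (n := n)) :=
  fun p => by simp [momentumFlip]

/-- Both half-steps of `hugStep` meet at the same midpoint, where the reflection undoes itself. -/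
theorem involutive_momentumFlip_comp_hugStep {m n : ℕ} {J : Evec n → Matrix (Fin m) (Fin n) ℝ}
    (hR : ∀ x, Rrefl (J x) * Rrefl (J x) = 1) (δ : ℝ) :
    Function.Involutive (momentumFlip ∘ hugStep J δ) := by
  rintro ⟨x, v⟩
  simp only [Function.comp, hugStep, momentumFlip]
  set v' := mvE (Rrefl (J (x + (δ / 2) • v))) v with hv'
  have hmid : x + (δ / 2) • v + (δ / 2) • v' + (δ / 2) • -v' = x + (δ / 2) • v := by module
  have hback : mvE (Rrefl (J (x + (δ / 2) • v))) (-v') = -v := by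
    rw [mvE, map_neg, ← mvE, hv', mvE_mvE_of_mul_self_eq_one (hR _)]
  rw [hmid, hback, neg_neg, Prod.mk.injEq]
  exact ⟨by module, rfl⟩

theorem hug_step_time_reversible_general
    (m n : ℕ)
    (J : Evec n → Matrix (Fin m) (Fin n) ℝ)
    (hrank : ∀ x, (J x).rank = m)
    (δ : ℝ) :
    ∀ x v x' v' : Evec n,
      hugStep J δ (x, v) = (x', v') ↔ hugStep J δ (x', -v') = (x, -v) := by
  intro x v x' v'
  have hinv := involutive_momentumFlip_comp_hugStep (fun x => Rrefl_mul_self (hrank x)) δ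
  calc hugStep J δ (x, v) = (x', v')
      ↔ momentumFlip (hugStep J δ (x, v)) = (x', -v') :=
        momentumFlip_involutive.injective.eq_iff.symm
    _ ↔ (x, v) = momentumFlip (hugStep J δ (x', -v')) := hinv.eq_iff
    _ ↔ hugStep J δ (x', -v') = (x, -v) := eq_comm.trans momentumFlip_involutive.eq_iff

theorem hug_step_time_reversible
    (m n : ℕ) (hm : 0 < m) (hmn : m < n)
    (f : Evec n → Evec m) (hf : ContDiff ℝ (⊤ : ℕ∞) f)
    (J : Evec n → Matrix (Fin m) (Fin n) ℝ)
    (hJ : ∀ x, HasFDerivAt f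
      (LinearMap.toContinuousLinearMap (Matrix.toEuclideanLin (J x))) x)
    (hrank : ∀ x, (J x).rank = m)
    (δ : ℝ) (hδ : 0 < δ) :
    ∀ x v x' v' : Evec n,
      hugStep J δ (x, v) = (x', v') ↔ hugStep J δ (x', -v') = (x, -v) :=
  hug_step_time_reversible_general m n J hrank δ
end
end

section
/- Suppose that ‖H(x)‖ ≤ β for all x ∈ ℝⁿ and that H is γ-Lipschitz continuous, i.e. ‖H(x) − H(y)‖ ≤ γ‖x − y‖ for all x, y ∈ ℝⁿ. Then for every K ≥ 1 the Hug iterates satisfy ‖f(x_K) − f(x₀)‖ ≤ (δ²/12)‖v₀‖²(3β + γ(K−1)δ‖v₀‖). -/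
open Matrix MeasureTheory

noncomputable section

/-! Write `w_k = (δ/2) v_k`, so that `x_k = x_{k+1/2} - w_k` and `x_{k+1} = x_{k+1/2} + w_{k+1}`.
Since `J R = -J`, the reflection gives `J(x_{k+1/2}) w_{k+1} = -J(x_{k+1/2}) w_k`, so the
first-order terms cancel and each step `f(x_{k+1}) - f(x_k)` is a difference of two first-order
Taylor remainders at `x_{k+1/2}`. After telescoping, the remainder ahead of `x_{k+1/2}` and the
one behind `x_{k+3/2}` combine into the trapezoid-rule error of `f` on the segment between these
midpoints, which has length `δ‖v₀‖` because `R` is orthogonal; with `H` `γ`-Lipschitz this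
error is at most `γ (δ‖v₀‖)³ / 12`. Only the two outermost remainders are left, each at most
`(β/2) (δ‖v₀‖/2)²`. -/

namespace Matrix

variable {m n : ℕ} {A : Matrix (Fin m) (Fin n) ℝ}

theorem isUnit_of_rank_eq_card_s5 {ι K : Type*} [Fintype ι] [DecidableEq ι] [Field K]
    {B : Matrix ι ι K} (h : B.rank = Fintype.card ι) : IsUnit B := by
  have hrange : LinearMap.range B.mulVecLin = ⊤ :=
    Submodule.eq_top_of_finrank_eq (by rw [← rank, h, Module.finrank_fintype_fun_eq_card])
  exact mulVec_surjective_iff_isUnit.mp (LinearMap.range_eq_top.mp hrange)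

theorem mvE_mul {l : ℕ} (A : Matrix (Fin l) (Fin m) ℝ) (B : Matrix (Fin m) (Fin n) ℝ)
    (v : Evec n) : mvE (A * B) v = mvE A (mvE B v) := by
  simp [mvE, toLpLin_apply, mulVec_mulVec]

theorem norm_mvE_of_mem_unitaryGroup {Q : Matrix (Fin n) (Fin n) ℝ}
    (hQ : Q ∈ unitaryGroup (Fin n) ℝ) (v : Evec n) : ‖mvE Q v‖ = ‖v‖ := by
  have hQ' : toEuclideanCLM (n := Fin n) (𝕜 := ℝ) Q ∈ unitary _ := Unitary.map_mem _ hQ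
  exact ContinuousLinearMap.norm_map_of_mem_unitary hQ' v

theorem isUnit_mul_transpose_of_rank_eq_s5 (h : A.rank = m) : IsUnit (A * Aᵀ) :=
  isUnit_of_rank_eq_card_s5 (by rw [rank_self_mul_transpose, h, Fintype.card_fin])

theorem mul_pinv (hA : IsUnit (A * Aᵀ)) : A * pinv A = 1 := by
  rw [pinv, ← Matrix.mul_assoc, mul_nonsing_inv _ ((isUnit_iff_isUnit_det _).mp hA)]

theorem mul_Nproj (hA : IsUnit (A * Aᵀ)) : A * Nproj A = A := by
  rw [Nproj, ← Matrix.mul_assoc, mul_pinv hA, Matrix.one_mul]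

theorem Nproj_transpose (A : Matrix (Fin m) (Fin n) ℝ) : (Nproj A)ᵀ = Nproj A := by
  simp only [Nproj, pinv, transpose_mul, transpose_transpose, transpose_nonsing_inv,
    Matrix.mul_assoc]

theorem Nproj_mul_Nproj (hA : IsUnit (A * Aᵀ)) : Nproj A * Nproj A = Nproj A := by
  rw [Nproj, Matrix.mul_assoc, ← Matrix.mul_assoc A, mul_pinv hA, Matrix.one_mul]

theorem mul_Rrefl (hA : IsUnit (A * Aᵀ)) : A * Rrefl A = -A := by
  rw [Rrefl, Matrix.mul_sub, Matrix.mul_one, Matrix.mul_smul, mul_Nproj hA, two_smul]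
  abel

theorem Rrefl_transpose (A : Matrix (Fin m) (Fin n) ℝ) : (Rrefl A)ᵀ = Rrefl A := by
  rw [Rrefl, transpose_sub, transpose_smul, Nproj_transpose, transpose_one]

theorem Rrefl_mul_Rrefl (hA : IsUnit (A * Aᵀ)) : Rrefl A * Rrefl A = 1 := by
  simp only [Rrefl, two_smul, sub_mul, mul_sub, add_mul, mul_add, Matrix.one_mul,
    Matrix.mul_one, Nproj_mul_Nproj hA]
  abel

theorem Rrefl_mem_unitaryGroup (hA : IsUnit (A * Aᵀ)) : Rrefl A ∈ unitaryGroup (Fin n) ℝ := by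
  rw [mem_unitaryGroup_iff, star_eq_conjTranspose, conjTranspose_eq_transpose_of_trivial,
    Rrefl_transpose, Rrefl_mul_Rrefl hA]

end Matrix

section Calculus

variable {G : Type*} [NormedAddCommGroup G] [NormedSpace ℝ G]
  {ψ ψ' ψ'' : ℝ → G}

theorem norm_sub_sub_deriv_le_of_norm_deriv2_le (hψ : ∀ t, HasDerivAt ψ (ψ' t) t)
    (hψ' : ∀ t, HasDerivAt ψ' (ψ'' t) t) {C : ℝ} (hC : ∀ t, ‖ψ'' t‖ ≤ C) :
    ‖ψ 1 - ψ 0 - ψ' 0‖ ≤ C / 2 := by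
  have hslope : ∀ t ∈ Set.Icc (0 : ℝ) 1, ‖ψ' t - ψ' 0‖ ≤ C * (t - 0) :=
    norm_image_sub_le_of_norm_deriv_le_segment' (fun t _ => (hψ' t).hasDerivWithinAt)
      (fun t _ => hC t)
  have hg : ∀ t, HasDerivAt (fun s => ψ s - ψ 0 - s • ψ' 0) (ψ' t - ψ' 0) t := fun t =>
    (((hψ t).sub_const (ψ 0)).sub ((hasDerivAt_id' t).smul_const (ψ' 0))).congr_deriv
      (by rw [one_smul])
  have hB : ∀ t, HasDerivAt (fun s : ℝ => C / 2 * s ^ 2) (C * t) t := fun t =>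
    ((hasDerivAt_pow 2 t).const_mul (C / 2)).congr_deriv (by norm_num; ring)
  have := image_norm_le_of_norm_deriv_right_le_deriv_boundary
    (fun t _ => (hg t).continuousAt.continuousWithinAt) (fun t _ => (hg t).hasDerivWithinAt)
    (by simp) hB (fun t ht => by simpa using hslope t (Set.Ico_subset_Icc_self ht))
    (Set.right_mem_Icc.mpr zero_le_one)
  simpa using this

/-- Comparing the two ends of `[1/2 - s, 1/2 + s]` as `s` grows from `0` to `1/2`, the
first-order terms cancel and only `s • (ψ'' (1/2 + s) - ψ'' (1/2 - s)) = O(s²)` remains. -/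
theorem norm_trapezoid_error_le (hψ : ∀ t, HasDerivAt ψ (ψ' t) t)
    (hψ' : ∀ t, HasDerivAt ψ' (ψ'' t) t) {L : ℝ} (hL : ∀ s t, ‖ψ'' s - ψ'' t‖ ≤ L * |s - t|) :
    ‖ψ 1 - ψ 0 - (1 / 2 : ℝ) • (ψ' 0 + ψ' 1)‖ ≤ L / 12 := by
  set e : ℝ → G := fun s => ψ (1/2 + s) - ψ (1/2 - s) - s • (ψ' (1/2 + s) + ψ' (1/2 - s))
  have he : ∀ s, HasDerivAt e (-(s • (ψ'' (1/2 + s) - ψ'' (1/2 - s)))) s := fun s => by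
    have hplus : HasDerivAt (fun s : ℝ => 1/2 + s) 1 s := (hasDerivAt_id s).const_add _
    have hminus : HasDerivAt (fun s : ℝ => 1/2 - s) (-1) s := (hasDerivAt_id s).const_sub _
    have := (((hψ _).scomp s hplus).sub ((hψ _).scomp s hminus)).sub
      ((hasDerivAt_id s).smul (((hψ' _).scomp s hplus).add ((hψ' _).scomp s hminus)))
    refine this.congr_deriv ?_
    simp only [one_smul, neg_smul, id, Function.comp_apply, Pi.add_apply]
    module
  have hB : ∀ s, HasDerivAt (fun s : ℝ => 2 * L / 3 * s ^ 3) (2 * L * s ^ 2) s := fun s =>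
    ((hasDerivAt_pow 3 s).const_mul (2 * L / 3)).congr_deriv (by norm_num; ring)
  have hbound : ∀ s ∈ Set.Ico (0 : ℝ) (1/2),
      ‖-(s • (ψ'' (1/2 + s) - ψ'' (1/2 - s)))‖ ≤ 2 * L * s ^ 2 := fun s hs => by
    rw [norm_neg, norm_smul, Real.norm_of_nonneg hs.1]
    calc s * ‖ψ'' (1/2 + s) - ψ'' (1/2 - s)‖ ≤ s * (L * |1/2 + s - (1/2 - s)|) :=
          mul_le_mul_of_nonneg_left (hL _ _) hs.1
      _ = 2 * L * s ^ 2 := by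
          rw [show 1/2 + s - (1/2 - s) = 2 * s by ring, abs_of_nonneg (by linarith [hs.1])]
          ring
  have := image_norm_le_of_norm_deriv_right_le_deriv_boundary
    (fun s _ => (he s).continuousAt.continuousWithinAt) (fun s _ => (he s).hasDerivWithinAt)
    (by simp [e]) hB hbound (Set.right_mem_Icc.mpr (by norm_num))
  convert this using 1
  · norm_num [e]
    rw [add_comm ((1 / 2 : ℝ) • ψ' 0)]
  · ring

end Calculus

theorem Finset.sum_range_succ_sub_eq_add_sum_sub_succ {M : Type*} [AddCommGroup M]
    (A B : ℕ → M) (K : ℕ) :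
    ∑ k ∈ Finset.range (K + 1), (A k - B k) =
      (A K - B 0) + ∑ k ∈ Finset.range K, (A k - B (k + 1)) := by
  rw [Finset.sum_sub_distrib, Finset.sum_sub_distrib, Finset.sum_range_succ,
    Finset.sum_range_succ']
  abel

theorem norm_sum_range_succ_sub_le {F : Type*} [SeminormedAddCommGroup F] {A B : ℕ → F}
    {a b : ℝ} (hA : ∀ k, ‖A k‖ ≤ a)
    (hB : ∀ k, ‖B k‖ ≤ a) (hAB : ∀ k, ‖A k - B (k + 1)‖ ≤ b) (K : ℕ) :
    ‖∑ k ∈ Finset.range (K + 1), (A k - B k)‖ ≤ 2 * a + K * b := by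
  rw [Finset.sum_range_succ_sub_eq_add_sum_sub_succ]
  calc _ ≤ ‖A K - B 0‖ + ∑ k ∈ Finset.range K, ‖A k - B (k + 1)‖ :=
        (norm_add_le _ _).trans (add_le_add le_rfl (norm_sum_le _ _))
    _ ≤ (a + a) + ∑ _k ∈ Finset.range K, b :=
        add_le_add ((norm_sub_le _ _).trans (add_le_add (hA K) (hB 0)))
          (Finset.sum_le_sum fun k _ => hAB k)
    _ = 2 * a + K * b := by rw [Finset.sum_const, Finset.card_range, nsmul_eq_mul]; ring

section Leapfrog

variable {E F : Type*} [NormedAddCommGroup E] [NormedSpace ℝ E]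
  [NormedAddCommGroup F] [NormedSpace ℝ F]
  {f : E → F} {f' : E → E →L[ℝ] F} {f'' : E → E →L[ℝ] E →L[ℝ] F}

theorem hasDerivAt_comp_add_smul (hf : ∀ z, HasFDerivAt f (f' z) z) (a u : E) (t : ℝ) :
    HasDerivAt (fun s : ℝ => f (a + s • u)) (f' (a + t • u) u) t := by
  have hline : HasDerivAt (fun s : ℝ => a + s • u) u t := by
    simpa using ((hasDerivAt_id t).smul_const u).const_add a
  exact (hf _).comp_hasDerivAt t hline

theorem hasDerivAt_apply_comp_add_smul (hf' : ∀ z, HasFDerivAt f' (f'' z) z) (a u : E) (t : ℝ) :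
    HasDerivAt (fun s : ℝ => f' (a + s • u) u) (f'' (a + t • u) u u) t :=
  hasDerivAt_comp_add_smul (fun z => (ContinuousLinearMap.apply ℝ F u).hasFDerivAt.comp z (hf' z))
    a u t

def firstOrderRemainder (f : E → F) (f' : E → E →L[ℝ] F) (a u : E) : F :=
  f (a + u) - f a - f' a u

theorem norm_firstOrderRemainder_le (hf : ∀ z, HasFDerivAt f (f' z) z)
    (hf' : ∀ z, HasFDerivAt f' (f'' z) z) {β : ℝ} (hβ : ∀ z u, ‖f'' z u u‖ ≤ β * ‖u‖ ^ 2)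
    (a u : E) : ‖firstOrderRemainder f f' a u‖ ≤ β / 2 * ‖u‖ ^ 2 := by
  have := norm_sub_sub_deriv_le_of_norm_deriv2_le (hasDerivAt_comp_add_smul hf a u)
    (hasDerivAt_apply_comp_add_smul hf' a u) (fun t => hβ (a + t • u) u)
  simpa [firstOrderRemainder, div_mul_eq_mul_div] using this

theorem norm_trapezoid_error_le_of_fderiv2_lipschitz (hf : ∀ z, HasFDerivAt f (f' z) z)
    (hf' : ∀ z, HasFDerivAt f' (f'' z) z) {γ : ℝ}
    (hγ : ∀ y z u, ‖f'' y u u - f'' z u u‖ ≤ γ * ‖y - z‖ * ‖u‖ ^ 2) (a u : E) :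
    ‖f (a + u) - f a - (1 / 2 : ℝ) • (f' a u + f' (a + u) u)‖ ≤ γ / 12 * ‖u‖ ^ 3 := by
  have hL : ∀ s t : ℝ, ‖f'' (a + s • u) u u - f'' (a + t • u) u u‖ ≤ γ * ‖u‖ ^ 3 * |s - t| :=
    fun s t => by
      have h := hγ (a + s • u) (a + t • u) u
      rwa [add_sub_add_left_eq_sub, ← sub_smul, norm_smul, Real.norm_eq_abs,
        show γ * (|s - t| * ‖u‖) * ‖u‖ ^ 2 = γ * ‖u‖ ^ 3 * |s - t| by ring] at h
  have := norm_trapezoid_error_le (hasDerivAt_comp_add_smul hf a u)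
    (hasDerivAt_apply_comp_add_smul hf' a u) hL
  simpa [div_mul_eq_mul_div] using this

theorem sub_eq_firstOrderRemainder_sub {a u w : E} (h : f' a u = -f' a w) :
    f (a + u) - f (a - w) =
      firstOrderRemainder f f' a u - firstOrderRemainder f f' a (-w) := by
  simp only [firstOrderRemainder, map_neg, h, ← sub_eq_add_neg]
  abel

/-- The remainders at the two ends of the segment `[a, a + 2u]` combine into the
trapezoid-rule error on that segment. -/
theorem norm_firstOrderRemainder_sub_le (hf : ∀ z, HasFDerivAt f (f' z) z)
    (hf' : ∀ z, HasFDerivAt f' (f'' z) z) {γ : ℝ}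
    (hγ : ∀ y z u, ‖f'' y u u - f'' z u u‖ ≤ γ * ‖y - z‖ * ‖u‖ ^ 2) (a u : E) :
    ‖firstOrderRemainder f f' a u - firstOrderRemainder f f' (a + (2 : ℝ) • u) (-u)‖ ≤
      2 * γ / 3 * ‖u‖ ^ 3 := by
  have key := norm_trapezoid_error_le_of_fderiv2_lipschitz hf hf' hγ a ((2 : ℝ) • u)
  have hmid : a + (2 : ℝ) • u + -u = a + u := by module
  simp only [firstOrderRemainder, hmid, map_neg, map_smul] at key ⊢
  rw [norm_smul, Real.norm_two] at key
  convert key using 1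
  · congr 1
    module
  · ring

theorem norm_sub_le_of_leapfrog (hf : ∀ z, HasFDerivAt f (f' z) z)
    (hf' : ∀ z, HasFDerivAt f' (f'' z) z) {β γ : ℝ} (hβ : ∀ z u, ‖f'' z u u‖ ≤ β * ‖u‖ ^ 2)
    (hγ : ∀ y z u, ‖f'' y u u - f'' z u u‖ ≤ γ * ‖y - z‖ * ‖u‖ ^ 2) {δ : ℝ} (hδ : 0 ≤ δ)
    {x xh v : ℕ → E} (hxh : ∀ k, xh k = x k + (δ / 2) • v k)
    (hx : ∀ k, x (k + 1) = xh k + (δ / 2) • v (k + 1)) (hv_norm : ∀ k, ‖v k‖ = ‖v 0‖)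
    (hv_flip : ∀ k, f' (xh k) (v (k + 1)) = -f' (xh k) (v k)) (K : ℕ) :
    ‖f (x (K + 1)) - f (x 0)‖ ≤ δ ^ 2 / 12 * ‖v 0‖ ^ 2 * (3 * β + γ * K * δ * ‖v 0‖) := by
  set w : ℕ → E := fun k => (δ / 2) • v k
  have hw : ∀ k, ‖w k‖ = δ / 2 * ‖v 0‖ := fun k => by
    rw [norm_smul, Real.norm_of_nonneg (by positivity), hv_norm]
  set A : ℕ → F := fun k => firstOrderRemainder f f' (xh k) (w (k + 1))
  set B : ℕ → F := fun k => firstOrderRemainder f f' (xh k) (-w k)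
  have hstep : ∀ k, f (x (k + 1)) - f (x k) = A k - B k := fun k => by
    have hflip : f' (xh k) (w (k + 1)) = -f' (xh k) (w k) := by
      simp only [w, map_smul, hv_flip, smul_neg]
    rw [hx, show x k = xh k - w k by rw [hxh]; abel]
    exact sub_eq_firstOrderRemainder_sub hflip
  have hnext : ∀ k, xh (k + 1) = xh k + (2 : ℝ) • w (k + 1) := fun k => by
    rw [hxh, hx]
    module
  have hAB : ∀ k, ‖A k - B (k + 1)‖ ≤ γ / 12 * (δ * ‖v 0‖) ^ 3 := fun k => by
    have := norm_firstOrderRemainder_sub_le hf hf' hγ (xh k) (w (k + 1))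
    rw [hw, ← hnext] at this
    convert this using 1
    ring
  have htel : f (x (K + 1)) - f (x 0) = ∑ k ∈ Finset.range (K + 1), (A k - B k) := by
    rw [← Finset.sum_range_sub (fun k => f (x k))]
    exact Finset.sum_congr rfl fun k _ => hstep k
  rw [htel]
  refine (norm_sum_range_succ_sub_le (a := β / 2 * (δ / 2 * ‖v 0‖) ^ 2)
    (fun k => ?_) (fun k => ?_) hAB K).trans_eq (by ring)
  · simpa only [hw] using norm_firstOrderRemainder_le hf hf' hβ (xh k) (w (k + 1))
  · simpa only [norm_neg, hw] using norm_firstOrderRemainder_le hf hf' hβ (xh k) (-w k)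

end Leapfrog

section SecondDerivative

variable {E F : Type*} [NormedAddCommGroup E] [NormedSpace ℝ E]
  [NormedAddCommGroup F] [NormedSpace ℝ F]

theorem norm_fderiv_fderiv_apply_le (f : E → F) (z u : E) :
    ‖fderiv ℝ (fderiv ℝ f) z u u‖ ≤ ‖iteratedFDeriv ℝ 2 f z‖ * ‖u‖ ^ 2 := by
  rw [← iteratedFDeriv_two_apply f z (fun _ => u)]
  exact (iteratedFDeriv ℝ 2 f z).le_opNorm_mul_pow_of_le (pi_norm_const_le u)

theorem norm_fderiv_fderiv_apply_sub_le (f : E → F) (y z u : E) :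
    ‖fderiv ℝ (fderiv ℝ f) y u u - fderiv ℝ (fderiv ℝ f) z u u‖ ≤
      ‖iteratedFDeriv ℝ 2 f y - iteratedFDeriv ℝ 2 f z‖ * ‖u‖ ^ 2 := by
  rw [← iteratedFDeriv_two_apply f y (fun _ => u), ← iteratedFDeriv_two_apply f z (fun _ => u),
    ← _root_.sub_apply]
  exact ContinuousMultilinearMap.le_opNorm_mul_pow_of_le _ (pi_norm_const_le u)

end SecondDerivative

theorem hug_level_set_deviation_bound_general
    (m n : ℕ)
    (f : Evec n → Evec m) (hf : ContDiff ℝ (⊤ : ℕ∞) f)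
    (J : Evec n → Matrix (Fin m) (Fin n) ℝ)
    (hJ : ∀ x, HasFDerivAt f
      (LinearMap.toContinuousLinearMap (Matrix.toEuclideanLin (J x))) x)
    (hrank : ∀ x, (J x).rank = m)
    (δ : ℝ) (hδ : 0 < δ)
    (x xh v : ℕ → Evec n)
    (hxh : ∀ k, xh k = x k + (δ / 2) • v k)
    (hv : ∀ k, v (k + 1) = mvE (Rrefl (J (xh k))) (v k))
    (hx : ∀ k, x (k + 1) = xh k + (δ / 2) • v (k + 1))
    (β γ : ℝ)
    (hβ : ∀ y : Evec n, ‖iteratedFDeriv ℝ 2 f y‖ ≤ β)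
    (hγ : ∀ y z : Evec n,
      ‖iteratedFDeriv ℝ 2 f y - iteratedFDeriv ℝ 2 f z‖ ≤ γ * ‖y - z‖) :
    ∀ K : ℕ, 1 ≤ K →
      ‖f (x K) - f (x 0)‖ ≤
        δ ^ 2 / 12 * ‖v 0‖ ^ 2 * (3 * β + γ * ((K : ℝ) - 1) * δ * ‖v 0‖) := by
  have hunit : ∀ y, IsUnit (J y * (J y)ᵀ) := fun y =>
    Matrix.isUnit_mul_transpose_of_rank_eq_s5 (hrank y)
  have hf1 : ∀ z, HasFDerivAt f (fderiv ℝ f z) z := fun z =>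
    (hf.differentiable (by simp) z).hasFDerivAt
  have hf2 : ∀ z, HasFDerivAt (fderiv ℝ f) (fderiv ℝ (fderiv ℝ f) z) z := fun z =>
    ((hf.fderiv_right (m := (⊤ : ℕ∞)) (by simp)).differentiable (by simp) z).hasFDerivAt
  have hv_norm : ∀ k, ‖v k‖ = ‖v 0‖ := by
    intro k
    induction k with
    | zero => rfl
    | succ k ih =>
      rw [hv, Matrix.norm_mvE_of_mem_unitaryGroup (Matrix.Rrefl_mem_unitaryGroup (hunit _)), ih]
  have hv_flip : ∀ k, fderiv ℝ f (xh k) (v (k + 1)) = -fderiv ℝ f (xh k) (v k) := fun k => by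
    rw [(hJ _).fderiv, hv]
    change mvE (J (xh k)) (mvE _ (v k)) = -mvE (J (xh k)) (v k)
    rw [← Matrix.mvE_mul, Matrix.mul_Rrefl (hunit _)]
    simp [mvE]
  intro K hK
  obtain ⟨K, rfl⟩ := Nat.exists_eq_add_of_le' hK
  have := norm_sub_le_of_leapfrog hf1 hf2
    (fun z u => (norm_fderiv_fderiv_apply_le f z u).trans (by gcongr; exact hβ z))
    (fun y z u => (norm_fderiv_fderiv_apply_sub_le f y z u).trans (by gcongr; exact hγ y z))
    hδ.le hxh hx hv_norm hv_flip K
  simpa using this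

theorem hug_level_set_deviation_bound
    (m n : ℕ) (hm : 0 < m) (hmn : m < n)
    (f : Evec n → Evec m) (hf : ContDiff ℝ (⊤ : ℕ∞) f)
    (J : Evec n → Matrix (Fin m) (Fin n) ℝ)
    (hJ : ∀ x, HasFDerivAt f
      (LinearMap.toContinuousLinearMap (Matrix.toEuclideanLin (J x))) x)
    (hrank : ∀ x, (J x).rank = m)
    (δ : ℝ) (hδ : 0 < δ)
    (x xh v : ℕ → Evec n)
    (hxh : ∀ k, xh k = x k + (δ / 2) • v k)
    (hv : ∀ k, v (k + 1) = mvE (Rrefl (J (xh k))) (v k))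
    (hx : ∀ k, x (k + 1) = xh k + (δ / 2) • v (k + 1))
    (β γ : ℝ)
    (hβ : ∀ y : Evec n, ‖iteratedFDeriv ℝ 2 f y‖ ≤ β)
    (hγ : ∀ y z : Evec n,
      ‖iteratedFDeriv ℝ 2 f y - iteratedFDeriv ℝ 2 f z‖ ≤ γ * ‖y - z‖) :
    ∀ K : ℕ, 1 ≤ K →
      ‖f (x K) - f (x 0)‖ ≤
        δ ^ 2 / 12 * ‖v 0‖ ^ 2 * (3 * β + γ * ((K : ℝ) - 1) * δ * ‖v 0‖) :=
  hug_level_set_deviation_bound_general m n f hf J hJ hrank δ hδ x xh v hxh hv hx β γ hβ hγ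
end
end
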